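/- For every positive integer m, ∫_{0}^{π} (sin(mu/2)/sin(u/2))^4 du = π·(2m³ + m)/3. -/

import Mathlib

/-!
Since `2 sin² (x/2) = 1 - cos x`, the kernel is the square of the Fejér polynomial
`F_m(u) = (1 - cos mu) / (1 - cos u) = m + 2 ∑_{k=1}^{m-1} (m - k) cos ku`.
By orthogonality of the cosines on `[0, π]`,
`∫_0^π F_m² = π m² + 2π ∑_{k=1}^{m-1} (m - k)² = π (2m³ + m) / 3`.
-/

open Real Finset intervalIntegral

noncomputable def dirichletPoly (n : ℕ) (u : ℝ) : ℝ :=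
  1 + 2 * ∑ k ∈ range n, cos ((k + 1) * u)

noncomputable def fejerPoly (m : ℕ) (u : ℝ) : ℝ :=
  m + ∑ k ∈ range m, 2 * ((m : ℝ) - (k + 1)) * cos ((k + 1) * u)

theorem one_sub_cos_mul_dirichletPoly (n : ℕ) (u : ℝ) :
    (1 - cos u) * dirichletPoly n u = cos (n * u) - cos ((n + 1) * u) := by
  induction n with
  | zero => simp [dirichletPoly]
  | succ n ih =>
    have h := cos_add_cos ((n + 1 + 1) * u) (n * u)
    rw [show ((n + 1 + 1) * u + n * u) / 2 = (n + 1) * u by ring,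
      show ((n + 1 + 1) * u - n * u) / 2 = u by ring] at h
    rw [dirichletPoly, sum_range_succ, mul_add 2, ← add_assoc, mul_add, ← dirichletPoly, ih]
    push_cast
    linear_combination h

theorem fejerPoly_succ (m : ℕ) (u : ℝ) :
    fejerPoly (m + 1) u = fejerPoly m u + dirichletPoly m u := by
  have h (k : ℕ) : 2 * ((m : ℝ) + 1 - (k + 1)) * cos ((k + 1) * u)
      = 2 * ((m : ℝ) - (k + 1)) * cos ((k + 1) * u) + 2 * cos ((k + 1) * u) := by ring
  simp only [fejerPoly, dirichletPoly, sum_range_succ, Nat.cast_add, Nat.cast_one, h,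
    sum_add_distrib, mul_sum]
  ring

theorem one_sub_cos_mul_fejerPoly (m : ℕ) (u : ℝ) :
    (1 - cos u) * fejerPoly m u = 1 - cos (m * u) := by
  induction m with
  | zero => simp [fejerPoly]
  | succ m ih =>
    rw [fejerPoly_succ, mul_add, ih, one_sub_cos_mul_dirichletPoly]
    push_cast
    ring

theorem div_sin_half_sq_eq_fejerPoly (m : ℕ) {u : ℝ} (hu : sin (u / 2) ≠ 0) :
    (sin (m * u / 2) / sin (u / 2)) ^ 2 = fejerPoly m u := by
  rw [div_pow, div_eq_iff (pow_ne_zero 2 hu), sin_sq_eq_half_sub, sin_sq_eq_half_sub,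
    mul_div_cancel₀ _ two_ne_zero, mul_div_cancel₀ _ two_ne_zero]
  linear_combination -one_sub_cos_mul_fejerPoly m u / 2

theorem integral_cos_int_mul (n : ℤ) (hn : n ≠ 0) :
    ∫ u in (0 : ℝ)..π, cos (n * u) = 0 := by
  rw [integral_comp_mul_left cos (Int.cast_ne_zero.mpr hn)]
  simp [sin_int_mul_pi]

theorem integral_cos_succ_mul_cos_succ (k j : ℕ) :
    ∫ u in (0 : ℝ)..π, cos ((k + 1) * u) * cos ((j + 1) * u)
      = if k = j then π / 2 else 0 := by
  have product_to_sum (u : ℝ) : cos ((k + 1) * u) * cos ((j + 1) * u)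
      = (cos (((k + j + 2 : ℤ) : ℝ) * u) + cos (((k - j : ℤ) : ℝ) * u)) / 2 := by
    push_cast
    rw [cos_add_cos]
    ring_nf
  simp_rw [product_to_sum]
  rw [integral_div, integral_add (Continuous.intervalIntegrable (by fun_prop) _ _)
    (Continuous.intervalIntegrable (by fun_prop) _ _), integral_cos_int_mul _ (by omega)]
  split_ifs with hkj
  · simp [hkj]
  · rw [integral_cos_int_mul _ (by omega)]
    simp

theorem integral_sq_const_add_sum_cos (a : ℝ) (c : ℕ → ℝ) (n : ℕ) :
    ∫ u in (0 : ℝ)..π, (a + ∑ k ∈ range n, c k * cos ((k + 1) * u)) ^ 2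
      = π * a ^ 2 + π / 2 * ∑ k ∈ range n, c k ^ 2 := by
  have expand (u : ℝ) : (a + ∑ k ∈ range n, c k * cos ((k + 1) * u)) ^ 2
      = a ^ 2 + ∑ k ∈ range n, c k * (2 * a * cos ((k + 1) * u)
          + ∑ j ∈ range n, c j * (cos ((k + 1) * u) * cos ((j + 1) * u))) := by
    rw [add_sq, sq (∑ k ∈ range n, _), sum_mul_sum, mul_sum, add_assoc, ← sum_add_distrib]
    congr 1
    refine sum_congr rfl fun k _ => ?_
    rw [mul_add, mul_sum]
    congr 1
    · ring
    · exact sum_congr rfl fun j _ => by ring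
  have integral_summand : ∀ k ∈ range n,
      ∫ u in (0 : ℝ)..π, c k * (2 * a * cos ((k + 1) * u)
        + ∑ j ∈ range n, c j * (cos ((k + 1) * u) * cos ((j + 1) * u))) = π / 2 * c k ^ 2 := by
    intro k hk
    have integral_cos : ∫ u in (0 : ℝ)..π, cos ((k + 1) * u) = 0 := by
      exact_mod_cast integral_cos_int_mul (k + 1) (by omega)
    rw [integral_const_mul, integral_add (Continuous.intervalIntegrable (by fun_prop) _ _)
      (Continuous.intervalIntegrable (by fun_prop) _ _),
      integral_finsetSum fun j _ => Continuous.intervalIntegrable (by fun_prop) _ _]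
    simp only [integral_const_mul, integral_cos_succ_mul_cos_succ, integral_cos, mul_ite,
      mul_zero, sum_ite_eq, if_pos hk]
    ring
  simp_rw [expand]
  rw [integral_add intervalIntegrable_const (Continuous.intervalIntegrable (by fun_prop) _ _),
    integral_finsetSum fun k _ => Continuous.intervalIntegrable (by fun_prop) _ _,
    sum_congr rfl integral_summand, ← mul_sum]
  simp

theorem sum_range_sub_succ_sq (m : ℕ) :
    ∑ k ∈ range m, ((m : ℝ) - (k + 1)) ^ 2 = (m : ℝ) * (m - 1) * (2 * m - 1) / 6 := by
  induction m with
  | zero => simp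
  | succ m ih =>
    rw [sum_range_succ']
    push_cast
    simp only [add_sub_add_right_eq_sub, ih]
    ring

theorem integral_fejerPoly_sq (m : ℕ) :
    ∫ u in (0 : ℝ)..π, fejerPoly m u ^ 2 = π * (2 * (m : ℝ) ^ 3 + m) / 3 := by
  simp only [fejerPoly, integral_sq_const_add_sum_cos, mul_pow, ← mul_sum, sum_range_sub_succ_sq]
  ring

theorem integral_jacksonKernel (m : ℕ) :
    ∫ u in (0 : ℝ)..Real.pi, (Real.sin (m * u / 2) / Real.sin (u / 2)) ^ 4
      = Real.pi * (2 * (m : ℝ) ^ 3 + m) / 3 := by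
  rw [← integral_fejerPoly_sq m]
  -- Working on `Ι 0 π = Ioc 0 π` avoids `u = 0`, where the integrand is `0 / 0 = 0`, not `m⁴`.
  refine integral_congr_ae (Filter.Eventually.of_forall fun u hu => ?_)
  rw [Set.uIoc_of_le pi_pos.le] at hu
  have hsin : sin (u / 2) ≠ 0 :=
    (sin_pos_of_pos_of_lt_pi (by linarith [hu.1]) (by linarith [hu.2, pi_pos])).ne'
  rw [← div_sin_half_sq_eq_fejerPoly m hsin]
  ring
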